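/- Let M be a matroid of finite rank m, and let S be a finite sequence of non-loops in M with |S| > m(r-1), colored so that each color is used on at most one element (i.e., the coloring is injective on S). Then there exist r pairwise disjoint subsequences S_1, …, S_r with cl(∅) ⊊ cl(S_1) ⊆ … ⊆ cl(S_r), and each S_i is trivially rainbow. (Colorful matroidal Tverberg specializes to the uncolored version when all colors are distinct.) -/

import Mathlib

/-!
Repeatedly peel off a block spanning what is left: a preimage of a basis of the remaining
elements has at most `m` members and the same closure as them. Each peeling removes at most `m`
of the more than `m (r - 1)` elements, so after `r - 1` peelings a nonempty rest remains. The rest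
followed by the peeled blocks in reverse order of removal are `r` disjoint blocks, each contained
in the closure of every later one, and the first contains a nonloop. Since the coloring is
injective, every block is rainbow.
-/

open Set Function

section FinSnoc

variable {β : Type*} {n : ℕ}

lemma Fin.pairwise_disjoint_snoc [PartialOrder β] [OrderBot β] {f : Fin n → β} {a : β}
    (hf : Pairwise (Disjoint on f)) (ha : ∀ i, Disjoint (f i) a) :
    Pairwise (Disjoint on (Fin.snoc f a : Fin (n + 1) → β)) := by
  intro i j hij
  induction i using Fin.lastCases with
  | last =>
    induction j using Fin.lastCases with
    | last => exact absurd rfl hij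
    | cast j => simpa [onFun] using (ha j).symm
  | cast i =>
    induction j using Fin.lastCases with
    | last => simpa [onFun] using ha i
    | cast j => simpa [onFun] using hf fun h ↦ hij (congrArg _ h)

lemma Monotone.fin_snoc [Preorder β] {f : Fin n → β} {a : β} (hf : Monotone f)
    (ha : ∀ i, f i ≤ a) : Monotone (Fin.snoc f a : Fin (n + 1) → β) := by
  intro i j hij
  induction j using Fin.lastCases with
  | last => induction i using Fin.lastCases <;> simp [ha]
  | cast j =>
    induction i using Fin.lastCases with
    | last => exact absurd hij (Fin.castSucc_lt_last j).not_ge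
    | cast i => simpa using hf (Fin.castSucc_le_castSucc_iff.1 hij)

end FinSnoc

namespace Matroid

variable {α ι : Type*} {M : Matroid α} {m : ℕ}

lemma IsNonloop.loops_ssubset_closure {e : α} {X : Set α} (he : M.IsNonloop e) (heX : e ∈ X) :
    M.loops ⊂ M.closure X :=
  (ssubset_iff_of_subset (M.closure_subset_closure (empty_subset X))).2
    ⟨e, M.mem_closure_of_mem' heX he.mem_ground, he.not_isLoop⟩

lemma exists_subset_card_le_closure_image_eq (hm : M.eRank ≤ m) (S : ι → α) (K : Finset ι) :
    ∃ T ⊆ K, T.card ≤ m ∧ M.closure (S '' T) = M.closure (S '' K) := by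
  obtain ⟨I, hI⟩ := M.exists_isBasis' (S '' K)
  obtain ⟨U, hUK, rfl⟩ := subset_image_iff.1 hI.subset
  obtain ⟨V, hVU, hV⟩ := exists_subset_bijOn U S
  have hVfin : V.Finite := K.finite_toSet.subset (hVU.trans hUK)
  refine ⟨hVfin.toFinset, by simpa using hVU.trans hUK, ?_, ?_⟩
  · have hVm : (S '' V).encard ≤ m := hV.image_eq ▸ hI.indep.encard_le_eRank.trans hm
    rw [hV.injOn.encard_image, hVfin.encard_eq_coe_toFinset_card] at hVm
    exact_mod_cast hVm
  · rw [hVfin.coe_toFinset, hV.image_eq, hI.closure_eq_closure]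

theorem exists_disjoint_monotone_closure_image [DecidableEq ι] (hm : M.eRank ≤ m) (S : ι → α)
    (r : ℕ) (K : Finset ι) (hK : m * r < K.card) :
    ∃ J : Fin (r + 1) → Finset ι, (∀ k, J k ⊆ K) ∧ Pairwise (Disjoint on J) ∧ (J 0).Nonempty ∧
      Monotone fun k ↦ M.closure (S '' J k) := by
  induction r generalizing K with
  | zero =>
    obtain ⟨i, hi⟩ := Finset.card_pos.1 (by omega)
    have : Subsingleton (Fin (0 + 1)) := Fin.subsingleton_one
    exact ⟨fun _ ↦ {i}, by simpa, Subsingleton.pairwise, by simp, Subsingleton.monotone _⟩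
  | succ r ih =>
    obtain ⟨T, hTK, hTm, hT⟩ := exists_subset_card_le_closure_image_eq hm S K
    have hrest : m * r < (K \ T).card := by
      rw [Finset.card_sdiff_of_subset hTK]
      rw [Nat.mul_succ] at hK
      omega
    obtain ⟨J, hJK, hJ, hJ0, hJmono⟩ := ih (K \ T) hrest
    refine ⟨Fin.snoc J T, ?_, ?_, ?_, ?_⟩
    · simpa [Fin.forall_fin_succ', Fin.snoc_castSucc, Fin.snoc_last, hTK]
        using fun k ↦ (hJK k).trans Finset.sdiff_subset
    · exact Fin.pairwise_disjoint_snoc hJ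
        fun k ↦ Finset.disjoint_of_subset_left (hJK k) Finset.sdiff_disjoint
    · rwa [← Fin.castSucc_zero, Fin.snoc_castSucc]
    · change Monotone ((fun X : Finset ι ↦ M.closure (S '' X)) ∘ Fin.snoc J T)
      rw [Fin.comp_snoc]
      refine hJmono.fin_snoc fun k ↦ ?_
      rw [hT]
      exact M.closure_subset_closure (image_mono ((hJK k).trans Finset.sdiff_subset))

end Matroid

theorem matroidal_tverberg_injective_coloring_general {α ι C : Type*} [Fintype ι]
    (M : Matroid α) (m r : ℕ) (hr : 1 ≤ r)
    (B : Set α) (hB : M.IsBase B) (hBfin : B.Finite) (hBm : B.ncard = m)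
    (S : ι → α) (hS : ∀ i, S i ∈ M.E) (hS' : ∀ i, S i ∉ M.closure ∅)
    (c : ι → C) (hc : Function.Injective c)
    (hlen : Fintype.card ι > m * (r - 1)) :
    ∃ J : Fin r → Finset ι,
      (∀ i j, i ≠ j → Disjoint (J i) (J j)) ∧
      (∀ k : Fin r, Set.InjOn c (J k : Set ι)) ∧
      M.closure ∅ ⊂ M.closure (S '' (J ⟨0, hr⟩ : Set ι)) ∧
      (∀ i j : Fin r, i ≤ j →
        M.closure (S '' (J i : Set ι)) ⊆ M.closure (S '' (J j : Set ι))) := by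
  classical
  obtain ⟨r, rfl⟩ : ∃ r', r = r' + 1 := ⟨r - 1, by omega⟩
  have hm : M.eRank ≤ m := by rw [← hB.encard_eq_eRank, ← hBfin.cast_ncard_eq, hBm]
  obtain ⟨J, -, hJ, ⟨i, hi⟩, hmono⟩ :=
    M.exists_disjoint_monotone_closure_image hm S r Finset.univ (by simpa using hlen)
  have hnonloop : M.IsNonloop (S i) := ⟨hS' i, hS i⟩
  exact ⟨J, fun _ _ h ↦ hJ h, fun _ ↦ hc.injOn, hnonloop.loops_ssubset_closure (mem_image_of_mem S hi),
    fun _ _ h ↦ hmono h⟩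

/-- Colorful matroidal Tverberg with an injective coloring: the uncolored version,
where every subsequence is trivially rainbow. -/
theorem matroidal_tverberg_injective_coloring {α ι C : Type*} [Fintype ι]
    [DecidableEq ι]
    (M : Matroid α) (m r : ℕ) (hr : 1 ≤ r)
    (B : Set α) (hB : M.IsBase B) (hBfin : B.Finite) (hBm : B.ncard = m)
    (S : ι → α) (hS : ∀ i, S i ∈ M.E) (hS' : ∀ i, S i ∉ M.closure ∅)
    (c : ι → C) (hc : Function.Injective c)
    (hlen : Fintype.card ι > m * (r - 1)) :
    ∃ J : Fin r → Finset ι,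
      (∀ i j, i ≠ j → Disjoint (J i) (J j)) ∧
      (∀ k : Fin r, Set.InjOn c (J k : Set ι)) ∧
      M.closure ∅ ⊂ M.closure (S '' (J ⟨0, hr⟩ : Set ι)) ∧
      (∀ i j : Fin r, i ≤ j →
        M.closure (S '' (J i : Set ι)) ⊆ M.closure (S '' (J j : Set ι))) :=
  matroidal_tverberg_injective_coloring_general M m r hr B hB hBfin hBm S hS hS' c hc hlen
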